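/- For every fixed real s > 0, the function h(t) = (1 + s² − t)² − 4s² − s⁴·(1 + 1/(t−1))², defined for t > 1, satisfies lim_{t→1⁺} h(t) = −∞ and lim_{t→+∞} h(t) = +∞, and h has exactly one zero in the interval (1, +∞). -/

import Mathlib

/-!
Writing `u = t - 1 > 0`, clearing denominators gives `h(1 + u) = u² (1 - φ u)` with
`φ u = 2s²/u + 4s²/u² + 2s⁴/u³ + s⁴/u⁴`, a positive combination of negative powers of `u`,
hence strictly decreasing. So `h` vanishes exactly where `φ (t - 1) = 1`, which happens at most
once. The limits are read off termwise (only `s⁴ (1 + 1/(t - 1))²` blows up at `1⁺`), and the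
intermediate value theorem between them produces the zero.
-/

open Filter Topology Set

theorem exists_eq_zero_of_tendsto_nhdsGT_atBot_of_tendsto_atTop {f : ℝ → ℝ} {a : ℝ}
    (hf : ContinuousOn f (Ioi a)) (hbot : Tendsto f (𝓝[>] a) atBot)
    (htop : Tendsto f atTop atTop) : ∃ t ∈ Ioi a, f t = 0 := by
  obtain ⟨b, hfb, hab⟩ :=
    ((hbot.eventually (eventually_lt_atBot 0)).and self_mem_nhdsWithin).exists
  obtain ⟨c, hfc, hbc⟩ :=
    ((htop.eventually (eventually_gt_atTop 0)).and (eventually_gt_atTop b)).exists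
  have hsub : Icc b c ⊆ Ioi a := fun x hx => lt_of_lt_of_le hab hx.1
  obtain ⟨t, ht, hft⟩ := intermediate_value_Icc hbc.le (hf.mono hsub) ⟨hfb.le, hfc.le⟩
  exact ⟨t, hsub ht, hft⟩

noncomputable def hFun (s t : ℝ) : ℝ :=
  (1 + s ^ 2 - t) ^ 2 - 4 * s ^ 2 - s ^ 4 * (1 + 1 / (t - 1)) ^ 2

noncomputable def phi (s u : ℝ) : ℝ :=
  2 * s ^ 2 / u + 4 * s ^ 2 / u ^ 2 + 2 * s ^ 4 / u ^ 3 + s ^ 4 / u ^ 4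

theorem hFun_eq_sq_mul_one_sub_phi (s : ℝ) {t : ℝ} (ht : t ≠ 1) :
    hFun s t = (t - 1) ^ 2 * (1 - phi s (t - 1)) := by
  have : t - 1 ≠ 0 := sub_ne_zero.mpr ht
  unfold hFun phi
  field_simp
  ring

theorem hFun_eq_zero_iff (s : ℝ) {t : ℝ} (ht : t ≠ 1) : hFun s t = 0 ↔ phi s (t - 1) = 1 := by
  rw [hFun_eq_sq_mul_one_sub_phi s ht, mul_eq_zero, sub_eq_zero, eq_comm (a := (1 : ℝ))]
  simp [sub_ne_zero.mpr ht]

theorem strictAntiOn_phi {s : ℝ} (hs : s ≠ 0) : StrictAntiOn (phi s) (Ioi 0) := by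
  intro a (ha : 0 < a) b (hb : 0 < b) hab
  have : 0 < s ^ 2 := by positivity
  unfold phi
  gcongr

theorem subsingleton_zeros_hFun {s : ℝ} (hs : s ≠ 0) : (Ioi 1 ∩ hFun s ⁻¹' {0}).Subsingleton := by
  rintro t ⟨ht : 1 < t, h0 : hFun s t = 0⟩ t' ⟨ht' : 1 < t', h0' : hFun s t' = 0⟩
  rw [hFun_eq_zero_iff s ht.ne'] at h0
  rw [hFun_eq_zero_iff s ht'.ne'] at h0'
  simpa using (strictAntiOn_phi hs).injOn (sub_pos.mpr ht) (sub_pos.mpr ht') (h0.trans h0'.symm)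

theorem continuousOn_hFun (s : ℝ) : ContinuousOn (hFun s) (Ioi 1) := by
  have : ∀ t ∈ Ioi (1 : ℝ), t - 1 ≠ 0 := fun t ht => sub_ne_zero.mpr (ne_of_gt ht)
  unfold hFun
  fun_prop (disch := assumption)

theorem tendsto_hFun_nhdsGT_one {s : ℝ} (hs : s ≠ 0) : Tendsto (hFun s) (𝓝[>] 1) atBot := by
  have hsub : Tendsto (fun t : ℝ => t - 1) (𝓝[>] 1) (𝓝[>] 0) := by
    have := (continuous_sub_right (1 : ℝ)).continuousWithinAt.tendsto_nhdsWithin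
      (x := 1) (s := Ioi 1) (t := Ioi 0) fun t ht => sub_pos.mpr ht
    rwa [sub_self] at this
  have hinv : Tendsto (fun t : ℝ => 1 + 1 / (t - 1)) (𝓝[>] 1) atTop :=
    tendsto_atTop_add_const_left _ 1 <|
      (tendsto_inv_nhdsGT_zero.comp hsub).congr fun t => (one_div _).symm
  have hcont : Tendsto (fun t : ℝ => (1 + s ^ 2 - t) ^ 2 - 4 * s ^ 2) (𝓝[>] 1)
      (𝓝 ((1 + s ^ 2 - 1) ^ 2 - 4 * s ^ 2)) :=
    (Continuous.tendsto (by fun_prop) 1).mono_left nhdsWithin_le_nhds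
  exact (hcont.add_atBot (tendsto_neg_atTop_atBot.comp
    (((tendsto_pow_atTop two_ne_zero).comp hinv).const_mul_atTop (by positivity)))).congr
    fun t => (sub_eq_add_neg _ _).symm

theorem tendsto_hFun_atTop (s : ℝ) : Tendsto (hFun s) atTop atTop := by
  have hsq : Tendsto (fun t : ℝ => (1 + s ^ 2 - t) ^ 2) atTop atTop := by
    refine ((tendsto_pow_atTop two_ne_zero).comp
      (tendsto_atTop_add_const_right _ (-(1 + s ^ 2)) tendsto_id)).congr fun t => ?_
    simp only [Function.comp_apply, id]
    ring
  have hinv : Tendsto (fun t : ℝ => 1 / (t - 1)) atTop (𝓝 0) :=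
    (tendsto_inv_atTop_zero.comp (tendsto_atTop_add_const_right _ (-1 : ℝ) tendsto_id)).congr
      fun t => by simp [sub_eq_add_neg]
  have hrest : Tendsto (fun t : ℝ => -(4 * s ^ 2) - s ^ 4 * (1 + 1 / (t - 1)) ^ 2) atTop
      (𝓝 (-(4 * s ^ 2) - s ^ 4 * (1 + 0) ^ 2)) :=
    tendsto_const_nhds.sub (tendsto_const_nhds.mul ((tendsto_const_nhds.add hinv).pow 2))
  exact (hsq.atTop_add hrest).congr fun t => by unfold hFun; ring

theorem stmt2 (s : ℝ) (hs : 0 < s) :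
    Filter.Tendsto (fun t : ℝ => (1 + s ^ 2 - t) ^ 2 - 4 * s ^ 2 - s ^ 4 * (1 + 1 / (t - 1)) ^ 2)
      (nhdsWithin 1 (Set.Ioi 1)) Filter.atBot ∧
    Filter.Tendsto (fun t : ℝ => (1 + s ^ 2 - t) ^ 2 - 4 * s ^ 2 - s ^ 4 * (1 + 1 / (t - 1)) ^ 2)
      Filter.atTop Filter.atTop ∧
    ∃! t : ℝ, t ∈ Set.Ioi (1 : ℝ) ∧
      (1 + s ^ 2 - t) ^ 2 - 4 * s ^ 2 - s ^ 4 * (1 + 1 / (t - 1)) ^ 2 = 0 := by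
  have hbot := tendsto_hFun_nhdsGT_one hs.ne'
  have htop := tendsto_hFun_atTop s
  obtain ⟨t, ht, h0⟩ :=
    exists_eq_zero_of_tendsto_nhdsGT_atBot_of_tendsto_atTop (continuousOn_hFun s) hbot htop
  exact ⟨hbot, htop, t, ⟨ht, h0⟩, fun t' ht' => subsingleton_zeros_hFun hs.ne' ht' ⟨ht, h0⟩⟩
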